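/- arXiv:1103.5861 — 9 statements merged into one kernel-verified Lean document; each statement's English description precedes it below -/
import Mathlib

section
/- Let r ≥ 1, let G = (g₁,…,g_r) be a system of polynomials with integer coefficients and F = (f₁,…,f_r) a system of arithmetical functions (f_i : ℕ → ℂ). Let m₁,…,m_r ∈ ℕ, m := lcm[m₁,…,m_r], and let M ∈ ℕ with m ∣ M. Then (1/M) · ∑_{k=1}^{M} f₁(gcd(g₁(k), m₁)) ⋯ f_r(gcd(g_r(k), m_r)) = ∑_{d₁ ∣ m₁, …, d_r ∣ m_r} [(μ∗f₁)(d₁) ⋯ (μ∗f_r)(d_r) / lcm[d₁,…,d_r]] · N_G(d₁,…,d_r). In particular the left-hand side does not depend on the choice of M. -/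
open Finset

/-- Dirichlet convolution of the Möbius function with `f`. -/
noncomputable def muConv (f : ℕ → ℂ) (d : ℕ) : ℂ :=
  ∑ e ∈ d.divisors, (ArithmeticFunction.moebius e : ℂ) * f (d / e)

/-- `NG g d` is the number of residues `x` modulo `lcm[d₁,…,d_r]` satisfying the
simultaneous congruences `gᵢ(x) ≡ 0 (mod dᵢ)` for all `i`. -/
def NG {r : ℕ} (g : Fin r → Polynomial ℤ) (d : Fin r → ℕ) : ℕ :=
  ((Finset.range (Finset.univ.lcm d)).filter
    (fun x : ℕ => ∀ i, (d i : ℤ) ∣ (g i).eval (x : ℤ))).card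

/-!
Möbius inversion writes `fᵢ(gcd(gᵢ(k), mᵢ))` as the sum of `(μ∗fᵢ)(d)` over the divisors `d`
of `mᵢ` with `d ∣ gᵢ(k)`. Multiplying out and exchanging the sums over `k` and `d`, the
coefficient of `∏ (μ∗fᵢ)(dᵢ)` is the number of `k ≤ M` with `dᵢ ∣ gᵢ(k)` for all `i`. That
condition is periodic in `k` with period `lcm[d₁,…,d_r]`, which divides `M`, so this number is
`M / lcm[d₁,…,d_r] · N_G(d₁,…,d_r)`.
-/

open ArithmeticFunction Function Polynomial

theorem sum_divisors_muConv (f : ℕ → ℂ) {n : ℕ} (hn : 0 < n) :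
    ∑ d ∈ n.divisors, muConv f d = f n :=
  sum_eq_iff_sum_mul_moebius_eq.mpr (fun n _ => by
    rw [muConv, Nat.sum_divisorsAntidiagonal fun e d => (moebius e : ℂ) * f d]) n hn

theorem Int.divisors_gcd_natCast (a : ℤ) {m : ℕ} (hm : m ≠ 0) :
    (Int.gcd a m).divisors = {e ∈ m.divisors | ((e : ℕ) : ℤ) ∣ a} := by
  have hgcd : Int.gcd a m ≠ 0 := by simp [Int.gcd_eq_zero_iff, hm]
  ext e
  simp [Nat.mem_divisors, Int.dvd_gcd_iff, Int.natCast_dvd_natCast, hm, hgcd, and_comm]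

theorem apply_gcd_eq_sum_muConv (f : ℕ → ℂ) (a : ℤ) {m : ℕ} (hm : 0 < m) :
    f (Int.gcd a m) = ∑ e ∈ m.divisors, if (e : ℤ) ∣ a then muConv f e else 0 := by
  rw [← sum_filter, ← Int.divisors_gcd_natCast a hm.ne',
    sum_divisors_muConv f (Int.gcd_pos_of_ne_zero_right a (by omega))]

theorem Nat.filter_Ico_card_eq_mul_count_of_periodic (n q a : ℕ) (p : ℕ → Prop)
    [DecidablePred p] (pp : Periodic p a) :
    #{x ∈ Ico n (n + q * a) | p x} = q * a.count p := by
  induction q with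
  | zero => simp
  | succ q ih =>
    rw [← Ico_union_Ico_eq_Ico (b := n + q * a) (by omega) (by nlinarith), filter_union,
      card_union_of_disjoint (disjoint_filter_filter (Ico_disjoint_Ico_consecutive _ _ _)), ih,
      show n + (q + 1) * a = n + q * a + a by ring,
      Nat.filter_Ico_card_eq_of_periodic _ _ p pp, add_one_mul]

theorem Nat.filter_Icc_card_eq_div_mul_count_of_periodic {a M : ℕ} (p : ℕ → Prop)
    [DecidablePred p] (pp : Periodic p a) (haM : a ∣ M) :
    #{x ∈ Icc 1 M | p x} = M / a * a.count p := by
  obtain ⟨q, rfl⟩ := haM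
  rcases Nat.eq_zero_or_pos a with rfl | ha
  · simp
  rw [← Ico_add_one_right_eq_Icc, add_comm, mul_comm, Nat.mul_div_cancel _ ha,
    Nat.filter_Ico_card_eq_mul_count_of_periodic _ _ _ _ pp]

theorem periodic_forall_dvd_eval {ι : Type*} (g : ι → ℤ[X]) (d : ι → ℕ) {L : ℕ}
    (hL : ∀ i, d i ∣ L) :
    Periodic (fun k : ℕ => ∀ i, (d i : ℤ) ∣ (g i).eval (k : ℤ)) L := by
  intro k
  refine propext (forall_congr' fun i => dvd_iff_dvd_of_dvd_sub ?_)
  have hstep : (d i : ℤ) ∣ ((k + L : ℕ) : ℤ) - k := by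
    simpa using Int.natCast_dvd_natCast.mpr (hL i)
  exact hstep.trans (sub_dvd_eval_sub _ _ (g i))

theorem NG_eq_count {r : ℕ} (g : Fin r → ℤ[X]) (d : Fin r → ℕ) :
    NG g d = (univ.lcm d).count fun k => ∀ i, (d i : ℤ) ∣ (g i).eval (k : ℤ) :=
  (Nat.count_eq_card_filter_range _ _).symm

-- The instance deciding `∀ i, p i k` is a parameter so that the lemma matches whichever
-- instance the goal carries (`Fintype.prod_ite_zero` and `NG` use different ones).
theorem sum_prod_ite_eq_card_filter_mul {ι R : Type*} [Fintype ι] [CommSemiring R]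
    (s : Finset ℕ) (p : ι → ℕ → Prop) [∀ i, DecidablePred (p i)]
    [DecidablePred fun k => ∀ i, p i k] (c : ι → R) :
    ∑ k ∈ s, ∏ i, (if p i k then c i else 0) = #{k ∈ s | ∀ i, p i k} * ∏ i, c i := by
  rw [card_eq_sum_ones, Nat.cast_sum, sum_mul, sum_filter]
  refine sum_congr rfl fun k _ => ?_
  rw [Fintype.prod_ite_zero]
  split_ifs <;> simp

theorem stmt0_general (r : ℕ) (g : Fin r → Polynomial ℤ) (f : Fin r → ℕ → ℂ)
    (m : Fin r → ℕ) (hm : ∀ i, 0 < m i) (M : ℕ) (hM0 : 0 < M)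
    (hM : (Finset.univ.lcm m) ∣ M) :
    (1 / (M : ℂ)) * ∑ k ∈ Finset.Icc 1 M, ∏ i, f i (Int.gcd ((g i).eval (k : ℤ)) (m i)) =
      ∑ d ∈ Fintype.piFinset (fun i => (m i).divisors),
        (∏ i, muConv (f i) (d i)) / ((Finset.univ.lcm d : ℕ) : ℂ) * (NG g d : ℂ) := by
  simp_rw [apply_gcd_eq_sum_muConv _ _ (hm _), prod_univ_sum]
  rw [sum_comm, mul_sum]
  refine sum_congr rfl fun d hd => ?_
  have hdm : ∀ i, d i ∣ m i := fun i => Nat.dvd_of_mem_divisors (Fintype.mem_piFinset.mp hd i)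
  have hdM : univ.lcm d ∣ M := (lcm_mono_fun fun i _ => hdm i).trans hM
  rw [sum_prod_ite_eq_card_filter_mul, Nat.filter_Icc_card_eq_div_mul_count_of_periodic _
    (periodic_forall_dvd_eval g d fun i => dvd_lcm (mem_univ i)) hdM, ← NG_eq_count, Nat.cast_mul,
    Nat.cast_div hdM (by exact_mod_cast (Nat.pos_of_dvd_of_pos hdM hM0).ne')]
  field_simp [show (M : ℂ) ≠ 0 by exact_mod_cast hM0.ne']

theorem stmt0 (r : ℕ) (hr : 1 ≤ r) (g : Fin r → Polynomial ℤ) (f : Fin r → ℕ → ℂ)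
    (m : Fin r → ℕ) (hm : ∀ i, 0 < m i) (M : ℕ) (hM0 : 0 < M)
    (hM : (Finset.univ.lcm m) ∣ M) :
    (1 / (M : ℂ)) * ∑ k ∈ Finset.Icc 1 M, ∏ i, f i (Int.gcd ((g i).eval (k : ℤ)) (m i)) =
      ∑ d ∈ Fintype.piFinset (fun i => (m i).divisors),
        (∏ i, muConv (f i) (d i)) / ((Finset.univ.lcm d : ℕ) : ℂ) * (NG g d : ℂ) :=
  stmt0_general r g f m hm M hM0 hM
end

section
/- For every system G = (g₁,…,g_r) of polynomials with integer coefficients, the function (m₁,…,m_r) ↦ η_G(m₁,…,m_r) is multiplicative; that is, η_G(m₁n₁,…,m_r n_r) = η_G(m₁,…,m_r) · η_G(n₁,…,n_r) holds for all m₁,…,m_r,n₁,…,n_r ∈ ℕ with gcd(m₁⋯m_r, n₁⋯n_r) = 1. -/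
/-!
Put `M = lcm mᵢ` and `N = lcm nᵢ`; they are coprime and `lcm (mᵢ nᵢ) = M N`. Whether `x` solves
the system modulo `(mᵢ)` depends only on `x mod M`, and likewise for `(nᵢ)` and `N`; since
`mᵢ` and `nᵢ` are coprime, `x` solves it modulo `(mᵢ nᵢ)` exactly when it solves it modulo both.
By the Chinese remainder theorem `x ↦ (x mod M, x mod N)` is a bijection from residues modulo
`M N` to pairs of residues, and it matches the solutions on both sides.
-/

open Finset

/-- `etaG g d` is the number of residues `x` modulo `lcm[d₁,…,d_r]` satisfying the
simultaneous congruences `gᵢ(x) ≡ 0 (mod dᵢ)` together with `gcd(x, dᵢ) = 1` for all `i`. -/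
def etaG {r : ℕ} (g : Fin r → Polynomial ℤ) (d : Fin r → ℕ) : ℕ :=
  ((Finset.range (Finset.univ.lcm d)).filter
    (fun x : ℕ => (∀ i, (d i : ℤ) ∣ (g i).eval (x : ℤ)) ∧ ∀ i, Nat.gcd x (d i) = 1)).card

theorem Int.ModEq.polynomial_eval {n a b : ℤ} (p : Polynomial ℤ) (h : a ≡ b [ZMOD n]) :
    p.eval a ≡ p.eval b [ZMOD n] :=
  Int.modEq_iff_dvd.mpr ((Int.modEq_iff_dvd.mp h).trans (Polynomial.sub_dvd_eval_sub b a p))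

theorem card_filter_range_mul_of_coprime {M N : ℕ} (hMN : M.Coprime N) (p q : ℕ → Prop)
    [DecidablePred p] [DecidablePred q]
    (hp : ∀ x y, x ≡ y [MOD M] → p x → p y) (hq : ∀ x y, x ≡ y [MOD N] → q x → q y) :
    #{x ∈ range (M * N) | p x ∧ q x} = #{x ∈ range M | p x} * #{x ∈ range N | q x} := by
  rw [← card_product]
  refine card_nbij (fun x => (x % M, x % N)) ?_ ?_ ?_
  · intro x hx
    simp only [coe_filter, mem_range, Set.mem_ofPred_eq, coe_product, Set.mem_prod] at hx ⊢
    obtain ⟨hxMN, hpx, hqx⟩ := hx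
    exact ⟨⟨Nat.mod_lt x (Nat.pos_of_mul_pos_right (x.zero_le.trans_lt hxMN)),
        hp _ _ (Nat.mod_modEq x M).symm hpx⟩,
      ⟨Nat.mod_lt x (Nat.pos_of_mul_pos_left (x.zero_le.trans_lt hxMN)),
        hq _ _ (Nat.mod_modEq x N).symm hqx⟩⟩
  · intro x hx y hy hxy
    simp only [coe_filter, mem_range, Set.mem_ofPred_eq, Prod.mk.injEq] at hx hy hxy
    exact ((Nat.modEq_and_modEq_iff_modEq_mul hMN).mp hxy).eq_of_lt_of_lt hx.1 hy.1
  · rintro ⟨a, b⟩ hab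
    simp only [coe_product, coe_filter, mem_range, Set.mem_prod, Set.mem_ofPred_eq] at hab
    obtain ⟨⟨haM, hpa⟩, hbN, hqb⟩ := hab
    obtain ⟨k, hka, hkb⟩ := Nat.chineseRemainder hMN a b
    refine ⟨k % (M * N), ?_, ?_⟩
    · have hka' : k % (M * N) ≡ a [MOD M] :=
        ((Nat.mod_modEq k _).of_dvd (dvd_mul_right M N)).trans hka
      have hkb' : k % (M * N) ≡ b [MOD N] :=
        ((Nat.mod_modEq k _).of_dvd (dvd_mul_left N M)).trans hkb
      simp only [coe_filter, mem_range, Set.mem_ofPred_eq]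
      exact ⟨Nat.mod_lt k (Nat.mul_pos (by omega) (by omega)),
        hp _ _ hka'.symm hpa, hq _ _ hkb'.symm hqb⟩
    · simp only [Prod.mk.injEq, Nat.mod_mod_of_dvd k (dvd_mul_right M N),
        Nat.mod_mod_of_dvd k (dvd_mul_left N M)]
      exact ⟨Eq.trans hka (Nat.mod_eq_of_lt haM), Eq.trans hkb (Nat.mod_eq_of_lt hbN)⟩

theorem Finset.lcm_mul_of_coprime {ι : Type*} (s : Finset ι) {m n : ι → ℕ}
    (h : (s.lcm m).Coprime (s.lcm n)) :
    s.lcm (fun i => m i * n i) = s.lcm m * s.lcm n :=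
  Nat.dvd_antisymm (lcm_dvd fun _ hi => mul_dvd_mul (dvd_lcm hi) (dvd_lcm hi))
    (h.mul_dvd_of_dvd_of_dvd
      (lcm_dvd fun _ hi => (dvd_mul_right _ _).trans (dvd_lcm (f := fun i => m i * n i) hi))
      (lcm_dvd fun _ hi => (dvd_mul_left _ _).trans (dvd_lcm (f := fun i => m i * n i) hi)))

section CoprimeSolution

variable {r : ℕ} (g : Fin r → Polynomial ℤ)

def IsCoprimeSolution (d : Fin r → ℕ) (x : ℕ) : Prop :=
  (∀ i, (d i : ℤ) ∣ (g i).eval (x : ℤ)) ∧ ∀ i, Nat.gcd x (d i) = 1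

instance (d : Fin r → ℕ) : DecidablePred (IsCoprimeSolution g d) :=
  fun _ => inferInstanceAs (Decidable (_ ∧ _))

theorem etaG_eq_card_isCoprimeSolution (d : Fin r → ℕ) :
    etaG g d = #{x ∈ range (univ.lcm d) | IsCoprimeSolution g d x} :=
  rfl

theorem IsCoprimeSolution.of_modEq {d : Fin r → ℕ} {x y : ℕ}
    (hxy : x ≡ y [MOD univ.lcm d]) (hx : IsCoprimeSolution g d x) :
    IsCoprimeSolution g d y := by
  have hxy_i : ∀ i, x ≡ y [MOD d i] := fun i => hxy.of_dvd (dvd_lcm (mem_univ i))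
  refine ⟨fun i => ?_, fun i => ?_⟩
  · exact ((Int.natCast_modEq_iff.mpr (hxy_i i)).polynomial_eval (g i)).dvd_iff.mp (hx.1 i)
  · exact (hxy_i i).gcd_eq ▸ hx.2 i

theorem isCoprimeSolution_mul_iff {m n : Fin r → ℕ} (hmn : ∀ i, (m i).Coprime (n i)) (x : ℕ) :
    IsCoprimeSolution g (fun i => m i * n i) x ↔
      IsCoprimeSolution g m x ∧ IsCoprimeSolution g n x := by
  have hdvd : ∀ i, ((m i * n i : ℕ) : ℤ) ∣ (g i).eval (x : ℤ) ↔
      (m i : ℤ) ∣ (g i).eval (x : ℤ) ∧ (n i : ℤ) ∣ (g i).eval (x : ℤ) := fun i => by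
    push_cast
    exact ⟨fun h => ⟨dvd_of_mul_right_dvd h, dvd_of_mul_left_dvd h⟩,
      fun h => (hmn i).isCoprime.mul_dvd h.1 h.2⟩
  have hgcd : ∀ i, Nat.gcd x (m i * n i) = 1 ↔ Nat.gcd x (m i) = 1 ∧ Nat.gcd x (n i) = 1 :=
    fun i => Nat.coprime_mul_iff_right
  simp only [IsCoprimeSolution, hdvd, hgcd, forall_and]
  exact and_and_and_comm

end CoprimeSolution

theorem stmt2_general (r : ℕ) (g : Fin r → Polynomial ℤ) (m n : Fin r → ℕ)
    (h : Nat.Coprime (∏ i, m i) (∏ i, n i)) :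
    etaG g (fun i => m i * n i) = etaG g m * etaG g n := by
  have hlcm : (univ.lcm m).Coprime (univ.lcm n) :=
    (h.coprime_dvd_left (lcm_dvd_prod _ _)).coprime_dvd_right (lcm_dvd_prod _ _)
  have hmn : ∀ i, (m i).Coprime (n i) := fun i =>
    (h.coprime_dvd_left (dvd_prod_of_mem m (mem_univ i))).coprime_dvd_right
      (dvd_prod_of_mem n (mem_univ i))
  simp only [etaG_eq_card_isCoprimeSolution]
  rw [univ.lcm_mul_of_coprime hlcm, filter_congr fun x _ => isCoprimeSolution_mul_iff g hmn x]
  exact card_filter_range_mul_of_coprime hlcm _ _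
    (fun _ _ => IsCoprimeSolution.of_modEq g) (fun _ _ => IsCoprimeSolution.of_modEq g)

theorem stmt2 (r : ℕ) (g : Fin r → Polynomial ℤ) (m n : Fin r → ℕ)
    (hm : ∀ i, 0 < m i) (hn : ∀ i, 0 < n i)
    (h : Nat.Coprime (∏ i, m i) (∏ i, n i)) :
    etaG g (fun i => m i * n i) = etaG g m * etaG g n :=
  stmt2_general r g m n h
end

section
/- Let r ≥ 1, m₁,…,m_r ∈ ℕ, m := lcm[m₁,…,m_r], and let M ∈ ℕ with m ∣ M. Then (1/M) · ∑_{k=1}^{M} gcd(k, m₁) ⋯ gcd(k, m_r) = ∑_{d₁ ∣ m₁, …, d_r ∣ m_r} φ(d₁) ⋯ φ(d_r) / lcm[d₁,…,d_r]. -/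
/-!
Expanding each factor by Gauss' identity `gcd k n = ∑_{d ∣ gcd k n} φ d` writes
`∏ i, gcd k (m i)` as the sum of `∏ i, φ (d i)` over the tuples `d` of divisors of the `m i`
whose lcm divides `k`. Exchanging the sums over `k` and `d`, each tuple is counted
`M / lcm d` times, which is exact because `lcm d ∣ lcm m ∣ M`.
-/

open Finset
open scoped Nat

theorem Nat.filter_dvd_divisors_eq_divisors_gcd {n : ℕ} (k : ℕ) (hn : n ≠ 0) :
    {d ∈ n.divisors | d ∣ k} = (k.gcd n).divisors := by
  ext d
  simp [Nat.dvd_gcd_iff, hn, Nat.gcd_eq_zero_iff, and_comm]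

theorem Nat.sum_totient_filter_dvd {n : ℕ} (k : ℕ) (hn : n ≠ 0) :
    ∑ d ∈ n.divisors with d ∣ k, φ d = k.gcd n := by
  rw [Nat.filter_dvd_divisors_eq_divisors_gcd k hn, Nat.sum_totient]

section

variable {ι : Type*} [Fintype ι] [DecidableEq ι]

theorem filter_lcm_dvd_piFinset_divisors (m : ι → ℕ) (k : ℕ) :
    {d ∈ Fintype.piFinset (fun i => (m i).divisors) | univ.lcm d ∣ k} =
      Fintype.piFinset (fun i => {d ∈ (m i).divisors | d ∣ k}) := by
  ext d
  simp [Finset.lcm_dvd_iff, forall_and]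

theorem prod_gcd_eq_sum_prod_totient {m : ι → ℕ} (hm : ∀ i, m i ≠ 0) (k : ℕ) :
    ∏ i, k.gcd (m i) =
      ∑ d ∈ Fintype.piFinset (fun i => (m i).divisors) with univ.lcm d ∣ k, ∏ i, φ (d i) := by
  simp_rw [← Nat.sum_totient_filter_dvd k (hm _), prod_univ_sum,
    filter_lcm_dvd_piFinset_divisors]

theorem sum_Icc_prod_gcd {m : ι → ℕ} (hm : ∀ i, m i ≠ 0) (M : ℕ) :
    ∑ k ∈ Icc 1 M, ∏ i, k.gcd (m i) =
      ∑ d ∈ Fintype.piFinset (fun i => (m i).divisors), M / univ.lcm d * ∏ i, φ (d i) := by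
  simp_rw [prod_gcd_eq_sum_prod_totient hm, sum_filter]
  rw [sum_comm]
  refine sum_congr rfl fun d _ => ?_
  rw [← sum_filter, sum_const, smul_eq_mul,
    show Icc 1 M = Ioc 0 M from Icc_add_one_left_eq_Ioc 0 M, Nat.Ioc_filter_dvd_card_eq_div]

end

theorem stmt4_general (r : ℕ) (m : Fin r → ℕ)
    (M : ℕ) (hM0 : 0 < M) (hM : (Finset.univ.lcm m) ∣ M) :
    (1 / (M : ℚ)) * ∑ k ∈ Finset.Icc 1 M, ((∏ i, Nat.gcd k (m i) : ℕ) : ℚ) =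
      ∑ d ∈ Fintype.piFinset (fun i => (m i).divisors),
        (∏ i, (Nat.totient (d i) : ℚ)) / ((Finset.univ.lcm d : ℕ) : ℚ) := by
  have hm : ∀ i, m i ≠ 0 := fun i h =>
    hM0.ne' (Nat.eq_zero_of_zero_dvd (h ▸ (dvd_lcm (mem_univ i)).trans hM))
  rw [← Nat.cast_sum, sum_Icc_prod_gcd hm, Nat.cast_sum, mul_sum]
  refine sum_congr rfl fun d hd => ?_
  have hdM : univ.lcm d ∣ M := (lcm_dvd fun i _ =>
    (Nat.dvd_of_mem_divisors (Fintype.mem_piFinset.1 hd i)).trans (dvd_lcm (mem_univ i))).trans hM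
  have hd0 : ((univ.lcm d : ℕ) : ℚ) ≠ 0 := by exact_mod_cast ne_zero_of_dvd_ne_zero hM0.ne' hdM
  rw [Nat.cast_mul, Nat.cast_div hdM hd0]
  push_cast
  field_simp

theorem stmt4 (r : ℕ) (hr : 1 ≤ r) (m : Fin r → ℕ) (hm : ∀ i, 0 < m i)
    (M : ℕ) (hM0 : 0 < M) (hM : (Finset.univ.lcm m) ∣ M) :
    (1 / (M : ℚ)) * ∑ k ∈ Finset.Icc 1 M, ((∏ i, Nat.gcd k (m i) : ℕ) : ℚ) =
      ∑ d ∈ Fintype.piFinset (fun i => (m i).divisors),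
        (∏ i, (Nat.totient (d i) : ℚ)) / ((Finset.univ.lcm d : ℕ) : ℚ) :=
  stmt4_general r m M hM0 hM
end

section
/- Let g be a polynomial with integer coefficients, F = (f₁,…,f_r) a system of arithmetical functions, and let m₁,…,m_r ∈ ℕ be pairwise relatively prime, m := m₁⋯m_r. Then (1/φ(m)) · ∑_{1 ≤ k ≤ m, gcd(k,m)=1} f₁(gcd(g(k), m₁)) ⋯ f_r(gcd(g(k), m_r)) = ∏_{i=1}^{r} [ (1/φ(m_i)) · ∑_{1 ≤ k ≤ m_i, gcd(k,m_i)=1} f_i(gcd(g(k), m_i)) ]. -/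
/-!
Reduce `k` modulo `m = m₁ ⋯ m_r`: the summand depends only on the residues of `k` modulo the
`mᵢ`, because `gcd (g k, mᵢ)` is a function of `g k mod mᵢ`. By the Chinese remainder theorem the
units of `ZMod m` are the tuples of units of the `ZMod mᵢ`, so the sum over reduced residues
modulo `m` factors as the product of the sums over reduced residues modulo each `mᵢ`, and
counting the same units gives `φ m = ∏ φ mᵢ`.
-/

open Finset Function

theorem Int.gcd_natCast_eq_gcd_val_intCast (a : ℤ) (n : ℕ) :
    a.gcd n = (a : ZMod n).val.gcd n := by
  rcases eq_or_ne n 0 with rfl | hn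
  · simp only [Int.gcd_zero_right, Nat.cast_zero, Nat.gcd_zero_right]; rfl
  · have : NeZero n := ⟨hn⟩
    rw [← Int.gcd_emod, ← ZMod.val_intCast, Int.gcd_natCast_natCast]

instance NeZero.prod {ι : Type*} [Fintype ι] (m : ι → ℕ) [∀ i, NeZero (m i)] :
    NeZero (∏ i, m i) :=
  ⟨prod_ne_zero_iff.2 fun i _ => NeZero.ne (m i)⟩

namespace ZMod

variable {M : Type*} [AddCommMonoid M]

theorem sum_Icc_one_natCast_eq_sum (n : ℕ) [NeZero n] (F : ZMod n → M) :
    ∑ k ∈ Icc 1 n, F k = ∑ x, F x := by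
  obtain ⟨n, rfl⟩ := Nat.exists_eq_succ_of_ne_zero (NeZero.ne n)
  calc ∑ k ∈ Icc 1 (n + 1), F k = ∑ k ∈ range (n + 1), F (k + 1 : ℕ) := by
        rw [← Ico_add_one_right_eq_Icc, sum_Ico_eq_sum_range]; simp [add_comm]
    _ = ∑ k ∈ range (n + 1), F k := by
        rw [sum_range_succ, sum_range_succ' (fun k : ℕ => F k)]; simp
    _ = ∑ x, F x := by
        rw [← Fin.sum_univ_eq_sum_range]
        exact Fintype.sum_congr _ _ fun x => congrArg F (natCast_zmod_val (n := n + 1) x)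

theorem sum_Icc_filter_coprime_eq_sum_units (n : ℕ) [NeZero n] (F : ZMod n → M) :
    ∑ k ∈ (Icc 1 n).filter (fun k => k.gcd n = 1), F k = ∑ u : (ZMod n)ˣ, F u := by
  calc ∑ k ∈ (Icc 1 n).filter (fun k => k.gcd n = 1), F k
      = ∑ k ∈ Icc 1 n, if IsUnit (k : ZMod n) then F k else 0 := by
        rw [sum_filter]; simp only [isUnit_iff_coprime, Nat.coprime_iff_gcd_eq_one]
    _ = ∑ x ∈ univ.filter IsUnit, F x := by
        rw [sum_Icc_one_natCast_eq_sum n fun x => if IsUnit x then F x else 0, ← sum_filter]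
    _ = ∑ u : (ZMod n)ˣ, F u := by
        refine (sum_congr ?_ fun _ _ => rfl).trans
          (sum_map univ ⟨Units.val, Units.val_injective⟩ F)
        ext; simp [IsUnit]

variable {ι : Type*} [Fintype ι] (m : ι → ℕ)

noncomputable def unitsEquivPi (hm : Pairwise (Nat.Coprime on m)) :
    (ZMod (∏ i, m i))ˣ ≃* ∀ i, (ZMod (m i))ˣ :=
  (Units.mapEquiv (prodEquivPi m hm).toMulEquiv).trans MulEquiv.piUnits

theorem val_unitsEquivPi_apply (hm : Pairwise (Nat.Coprime on m)) (u : (ZMod (∏ i, m i))ˣ)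
    (i : ι) :
    (unitsEquivPi m hm u i : ZMod (m i)) = (u : ZMod (∏ j, m j)).cast := by
  simp [unitsEquivPi, castHom_apply]

theorem _root_.Nat.totient_prod_of_pairwise_coprime (hm : Pairwise (Nat.Coprime on m))
    [∀ i, NeZero (m i)] : (∏ i, m i).totient = ∏ i, (m i).totient := by
  classical
  simp only [← card_units_eq_totient]
  rw [Fintype.card_congr (unitsEquivPi m hm).toEquiv, Fintype.card_pi]

theorem sum_units_prod_cast_eq_prod_sum_units {R : Type*} [CommSemiring R] [DecidableEq ι]
    (hm : Pairwise (Nat.Coprime on m)) [∀ i, NeZero (m i)] (F : ∀ i, ZMod (m i) → R) :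
    ∑ u : (ZMod (∏ i, m i))ˣ, ∏ i, F i (u : ZMod (∏ j, m j)).cast =
      ∏ i, ∑ u : (ZMod (m i))ˣ, F i u := by
  rw [Fintype.prod_sum]
  exact Fintype.sum_equiv (unitsEquivPi m hm).toEquiv _ _ fun u => by
    simp [val_unitsEquivPi_apply]

theorem sum_Icc_filter_coprime_prod_eq_prod_sum {R : Type*} [CommSemiring R] [DecidableEq ι]
    (hm : Pairwise (Nat.Coprime on m)) [∀ i, NeZero (m i)] (F : ∀ i, ZMod (m i) → R) :
    ∑ k ∈ (Icc 1 (∏ i, m i)).filter (fun k => k.gcd (∏ i, m i) = 1), ∏ i, F i k =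
      ∏ i, ∑ k ∈ (Icc 1 (m i)).filter (fun k => k.gcd (m i) = 1), F i k := by
  have hcast (k : ℕ) (i : ι) : ((k : ZMod (∏ j, m j)).cast : ZMod (m i)) = k :=
    cast_natCast (dvd_prod_of_mem m (mem_univ i)) k
  calc _ = ∑ k ∈ (Icc 1 (∏ i, m i)).filter (fun k => k.gcd (∏ i, m i) = 1),
          ∏ i, F i (k : ZMod (∏ j, m j)).cast := by simp only [hcast]
    _ = ∏ i, ∑ u : (ZMod (m i))ˣ, F i u := by
        rw [sum_Icc_filter_coprime_eq_sum_units _ fun x => ∏ i, F i x.cast,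
          sum_units_prod_cast_eq_prod_sum_units m hm]
    _ = _ := by simp only [sum_Icc_filter_coprime_eq_sum_units]

end ZMod

theorem stmt6_general (r : ℕ) (g : Polynomial ℤ) (f : Fin r → ℕ → ℂ)
    (m : Fin r → ℕ) (hm : ∀ i, 0 < m i)
    (hcop : ∀ i j, i ≠ j → Nat.Coprime (m i) (m j)) :
    (1 / (Nat.totient (∏ i, m i) : ℂ)) *
        ∑ k ∈ (Finset.Icc 1 (∏ i, m i)).filter (fun k => Nat.gcd k (∏ i, m i) = 1),
          ∏ i, f i (Int.gcd (g.eval (k : ℤ)) (m i)) =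
      ∏ i, ((1 / (Nat.totient (m i) : ℂ)) *
        ∑ k ∈ (Finset.Icc 1 (m i)).filter (fun k => Nat.gcd k (m i) = 1),
          f i (Int.gcd (g.eval (k : ℤ)) (m i))) := by
  have (i : Fin r) : NeZero (m i) := ⟨(hm i).ne'⟩
  have hgcd (i : Fin r) (k : ℕ) : Int.gcd (g.eval (k : ℤ)) (m i) =
      ((g.map (Int.castRingHom (ZMod (m i)))).eval (k : ZMod (m i))).val.gcd (m i) := by
    rw [Polynomial.eval_natCast_map, eq_intCast, Int.gcd_natCast_eq_gcd_val_intCast]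
  simp only [hgcd]
  rw [ZMod.sum_Icc_filter_coprime_prod_eq_prod_sum m hcop
      fun i x => f i (((g.map (Int.castRingHom (ZMod (m i)))).eval x).val.gcd (m i)),
    Nat.totient_prod_of_pairwise_coprime m hcop, Nat.cast_prod, prod_mul_distrib,
    prod_div_distrib, prod_const_one]

theorem stmt6 (r : ℕ) (hr : 1 ≤ r) (g : Polynomial ℤ) (f : Fin r → ℕ → ℂ)
    (m : Fin r → ℕ) (hm : ∀ i, 0 < m i)
    (hcop : ∀ i j, i ≠ j → Nat.Coprime (m i) (m j)) :
    (1 / (Nat.totient (∏ i, m i) : ℂ)) *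
        ∑ k ∈ (Finset.Icc 1 (∏ i, m i)).filter (fun k => Nat.gcd k (∏ i, m i) = 1),
          ∏ i, f i (Int.gcd (g.eval (k : ℤ)) (m i)) =
      ∏ i, ((1 / (Nat.totient (m i) : ℂ)) *
        ∑ k ∈ (Finset.Icc 1 (m i)).filter (fun k => Nat.gcd k (m i) = 1),
          f i (Int.gcd (g.eval (k : ℤ)) (m i))) :=
  stmt6_general r g f m hm hcop
end

section
/- Let r ≥ 1, let G = (g₁,…,g_r) be a system of polynomials with integer coefficients, let t₁,…,t_r be nonnegative integers, let m₁,…,m_r ∈ ℕ, m := lcm[m₁,…,m_r], and let M ∈ ℕ with m ∣ M. Then (1/φ(M)) · ∑_{1 ≤ k ≤ M, gcd(k,M)=1} gcd(g₁(k), m₁)^{t₁} ⋯ gcd(g_r(k), m_r)^{t_r} = ∑_{d₁ ∣ m₁, …, d_r ∣ m_r} [φ_{t₁}(d₁) ⋯ φ_{t_r}(d_r) / φ(lcm[d₁,…,d_r])] · η_G(d₁,…,d_r). -/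
open Finset

/-- The Jordan-type function `φ_t = μ ∗ id_t`, i.e.
`φ_t(n) = ∑_{e ∣ n} μ(e) (n/e)^t = n^t ∏_{p ∣ n} (1 - 1/p^t)`. -/
noncomputable def jordanPhi (t : ℕ) (n : ℕ) : ℂ :=
  ∑ e ∈ n.divisors, (ArithmeticFunction.moebius e : ℂ) * ((n / e : ℕ) : ℂ) ^ t

/-!
Each factor expands as `gcd(a, n)^t = ∑_{d ∣ n, d ∣ a} φ_t(d)` (Möbius inversion of
`∑_{d ∣ N} φ_t(d) = N^t`). Multiplying out and exchanging sums leaves, for each `d`, the number of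
units `k` mod `M` with `dᵢ ∣ gᵢ(k)` for all `i`. This condition only depends on `k` mod
`L = lcm[d₁,…,d_r]`, and the reduction `(ℤ/M)ˣ → (ℤ/L)ˣ` is a surjective homomorphism, so all its
fibres have `φ(M)/φ(L)` elements and the count is `φ(M) η_G(d) / φ(L)`.
-/

lemma sum_divisors_jordanPhi (t : ℕ) {n : ℕ} (hn : n ≠ 0) :
    ∑ d ∈ n.divisors, jordanPhi t d = (n : ℂ) ^ t := by
  refine (ArithmeticFunction.sum_eq_iff_sum_mul_moebius_eq (f := jordanPhi t)
    (g := fun n : ℕ => (n : ℂ) ^ t)).mpr (fun N _ => ?_) n (Nat.pos_of_ne_zero hn)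
  rw [Nat.sum_divisorsAntidiagonal fun a b => (ArithmeticFunction.moebius a : ℂ) * (b : ℂ) ^ t]
  rfl

lemma cast_gcd_pow_eq_sum_jordanPhi (t : ℕ) {n : ℕ} (hn : n ≠ 0) (a : ℤ) :
    ((a.gcd n : ℕ) : ℂ) ^ t =
      ∑ d ∈ n.divisors.filter (fun d : ℕ => (d : ℤ) ∣ a), jordanPhi t d := by
  have hdiv : n.divisors.filter (fun d : ℕ => (d : ℤ) ∣ a) = (a.gcd n).divisors := by
    ext d
    simp only [mem_filter, Nat.mem_divisors, Int.dvd_gcd_iff, Int.natCast_dvd_natCast]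
    grind [Int.gcd_eq_zero_iff]
  rw [hdiv, sum_divisors_jordanPhi t (Int.gcd_ne_zero_right (by exact_mod_cast hn))]

lemma MonoidHom.card_filter_comp_mul_card {G H : Type*} [Group G] [Group H] [Fintype G]
    [Fintype H] [DecidableEq H] (f : G →* H) (hf : Function.Surjective f) (Q : H → Prop)
    [DecidablePred Q] :
    #{x | Q (f x)} * Fintype.card H = Fintype.card G * #{y | Q y} := by
  have hfib (y : H) : #{x | f x = y} = #{x | f x = 1} :=
    card_fiber_eq_of_mem_range f (hf y) (hf 1)
  have hG : Fintype.card G = Fintype.card H * #{x | f x = 1} := by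
    rw [← card_univ, card_eq_sum_card_fiberwise (f := f) (t := univ) (by simp)]
    simp [hfib]
  have hQ : #{x | Q (f x)} = #{y | Q y} * #{x | f x = 1} := by
    rw [card_eq_sum_card_fiberwise (f := f) (t := {y | Q y}) (fun x hx => by simpa using hx),
      sum_congr rfl fun y hy => ?_, sum_const, smul_eq_mul]
    rw [filter_filter, ← hfib y]
    refine congrArg card (filter_congr fun x _ => ⟨And.right, fun hx => ⟨?_, hx⟩⟩)
    simpa [hx] using hy
  rw [hG, hQ]
  ring

lemma ZMod.card_units_filter_val (n : ℕ) [NeZero n] (P : ℕ → Prop) [DecidablePred P] :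
    #{u : (ZMod n)ˣ | P (u : ZMod n).val} = #{k ∈ range n | k.Coprime n ∧ P k} := by
  refine card_bij (fun u _ => (u : ZMod n).val) (fun u hu => ?_) (fun u _ v _ h => ?_)
    (fun k hk => ?_)
  · simp only [mem_filter, mem_univ, true_and, mem_range] at hu ⊢
    exact ⟨ZMod.val_lt _, ZMod.val_coe_unit_coprime u, hu⟩
  · exact Units.ext (ZMod.val_injective n h)
  · simp only [mem_filter, mem_range] at hk
    refine ⟨ZMod.unitOfCoprime k hk.2.1, ?_, ?_⟩ <;>
      simp [ZMod.val_natCast, Nat.mod_eq_of_lt hk.1, hk.2.2]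

lemma ZMod.val_unitsMap {m n : ℕ} [NeZero m] (h : n ∣ m) (u : (ZMod m)ˣ) :
    (unitsMap h u : ZMod n).val = (u : ZMod m).val % n := by
  rw [unitsMap_val, ← ZMod.natCast_val, ZMod.val_natCast]

lemma card_filter_coprime_Icc_mul_totient {L M : ℕ} (hM : M ≠ 0) (hLM : L ∣ M)
    {P : ℕ → Prop} [DecidablePred P] (hP : Function.Periodic P L) :
    #{k ∈ Icc 1 M | k.Coprime M ∧ P k} * L.totient =
      M.totient * #{x ∈ range L | x.Coprime L ∧ P x} := by
  have : NeZero M := ⟨hM⟩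
  have : NeZero L := ⟨fun h => hM (Nat.eq_zero_of_zero_dvd (h ▸ hLM))⟩
  have hPM : Function.Periodic P M := by
    obtain ⟨c, rfl⟩ := hLM
    simpa [mul_comm] using hP.nat_mul c
  have hperiodic : Function.Periodic (fun k => k.Coprime M ∧ P k) M := fun k => by
    simp only [Nat.coprime_add_self_left, hPM k]
  have hIcc :
      #{k ∈ Icc 1 M | k.Coprime M ∧ P k} = #{k ∈ range M | k.Coprime M ∧ P k} := by
    rw [← Nat.count_eq_card_filter_range, ← Nat.filter_Ico_card_eq_of_periodic 1 M _ hperiodic]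
    rw [add_comm, Finset.Ico_add_one_right_eq_Icc]
  have hval (u : (ZMod M)ˣ) : P (u : ZMod M).val ↔ P (ZMod.unitsMap hLM u : ZMod L).val := by
    rw [ZMod.val_unitsMap, hP.map_mod_nat]
  rw [hIcc, ← ZMod.card_units_filter_val, ← ZMod.card_units_filter_val,
    ← ZMod.card_units_eq_totient, ← ZMod.card_units_eq_totient,
    filter_congr fun u _ => hval u]
  exact (ZMod.unitsMap hLM).card_filter_comp_mul_card (ZMod.unitsMap_surjective hLM)
    (fun v => P (v : ZMod L).val)

lemma Nat.coprime_finset_lcm_right_iff {ι : Type*} {s : Finset ι} {d : ι → ℕ} {x : ℕ} :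
    x.Coprime (s.lcm d) ↔ ∀ i ∈ s, x.Coprime (d i) :=
  ⟨fun h _ hi => h.coprime_dvd_right (dvd_lcm hi),
    fun h => (Nat.Coprime.prod_right h).coprime_dvd_right (s.lcm_dvd_prod d)⟩

lemma periodic_dvd_eval (p : Polynomial ℤ) {d L : ℕ} (h : d ∣ L) :
    Function.Periodic (fun x : ℕ => (d : ℤ) ∣ p.eval (x : ℤ)) L := fun x => by
  have hsub : (L : ℤ) ∣ p.eval ((x + L : ℕ) : ℤ) - p.eval (x : ℤ) := by
    simpa using Polynomial.sub_dvd_eval_sub ((x + L : ℕ) : ℤ) x p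
  exact propext (dvd_iff_dvd_of_dvd_sub ((Int.natCast_dvd_natCast.mpr h).trans hsub))

lemma etaG_eq_card {r : ℕ} (g : Fin r → Polynomial ℤ) (d : Fin r → ℕ) :
    etaG g d = #((range (univ.lcm d)).filter fun x : ℕ =>
      x.Coprime (univ.lcm d) ∧ ∀ i, (d i : ℤ) ∣ (g i).eval (x : ℤ)) := by
  refine congrArg card (filter_congr fun x _ => ?_)
  simp [Nat.coprime_finset_lcm_right_iff, Nat.coprime_iff_gcd_eq_one, and_comm]

lemma card_filter_coprime_dvd_eval_mul_totient {r : ℕ} (g : Fin r → Polynomial ℤ)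
    (d : Fin r → ℕ) {M : ℕ} (hM : M ≠ 0) (hLM : univ.lcm d ∣ M) :
    #((Icc 1 M).filter fun k : ℕ =>
      k.Coprime M ∧ ∀ i, (d i : ℤ) ∣ (g i).eval (k : ℤ)) * (univ.lcm d).totient =
      M.totient * etaG g d := by
  rw [etaG_eq_card]
  exact card_filter_coprime_Icc_mul_totient hM hLM fun x =>
    forall_congr fun i => periodic_dvd_eval (g i) (dvd_lcm (mem_univ i)) x

theorem stmt8_general (r : ℕ) (g : Fin r → Polynomial ℤ) (t : Fin r → ℕ)
    (m : Fin r → ℕ) (hm : ∀ i, 0 < m i) (M : ℕ) (hM0 : 0 < M)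
    (hM : (Finset.univ.lcm m) ∣ M) :
    (1 / (Nat.totient M : ℂ)) *
        ∑ k ∈ (Finset.Icc 1 M).filter (fun k => Nat.gcd k M = 1),
          ∏ i, ((Int.gcd ((g i).eval (k : ℤ)) (m i) : ℕ) : ℂ) ^ (t i) =
      ∑ d ∈ Fintype.piFinset (fun i => (m i).divisors),
        (∏ i, jordanPhi (t i) (d i)) / (Nat.totient (Finset.univ.lcm d) : ℂ) *
          (etaG g d : ℂ) := by
  have hexpand (k : ℕ) : ∏ i, ((Int.gcd ((g i).eval (k : ℤ)) (m i) : ℕ) : ℂ) ^ (t i) =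
      ∑ d ∈ Fintype.piFinset (fun i => (m i).divisors),
        if ∀ i, (d i : ℤ) ∣ (g i).eval (k : ℤ) then ∏ i, jordanPhi (t i) (d i) else 0 := by
    simp_rw [cast_gcd_pow_eq_sum_jordanPhi _ (hm _).ne', sum_filter, prod_univ_sum,
      Fintype.prod_ite_zero]
    -- the two sides differ only in the `Decidable` instance of `∀ i, _`
    congr!
  rw [sum_congr rfl fun k _ => hexpand k, sum_comm, mul_sum]
  refine sum_congr rfl fun d hd => ?_
  have hLM : univ.lcm d ∣ M := (lcm_mono_fun fun i _ =>
    Nat.dvd_of_mem_divisors (Fintype.mem_piFinset.mp hd i)).trans hM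
  have hcount : (#((Icc 1 M).filter fun k : ℕ => Nat.gcd k M = 1 ∧
      ∀ i, (d i : ℤ) ∣ (g i).eval (k : ℤ)) : ℂ) *
      (univ.lcm d).totient = M.totient * etaG g d := by
    exact_mod_cast card_filter_coprime_dvd_eval_mul_totient g d hM0.ne' hLM
  have hMt : (M.totient : ℂ) ≠ 0 := by exact_mod_cast (Nat.totient_pos.mpr hM0).ne'
  have hLt : ((univ.lcm d).totient : ℂ) ≠ 0 := by
    exact_mod_cast (Nat.totient_pos.mpr (Nat.pos_of_dvd_of_pos hLM hM0)).ne'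
  rw [← sum_filter, sum_const, filter_filter, nsmul_eq_mul]
  field_simp
  linear_combination (∏ i, jordanPhi (t i) (d i)) * hcount

theorem stmt8 (r : ℕ) (hr : 1 ≤ r) (g : Fin r → Polynomial ℤ) (t : Fin r → ℕ)
    (m : Fin r → ℕ) (hm : ∀ i, 0 < m i) (M : ℕ) (hM0 : 0 < M)
    (hM : (Finset.univ.lcm m) ∣ M) :
    (1 / (Nat.totient M : ℂ)) *
        ∑ k ∈ (Finset.Icc 1 M).filter (fun k => Nat.gcd k M = 1),
          ∏ i, ((Int.gcd ((g i).eval (k : ℤ)) (m i) : ℕ) : ℂ) ^ (t i) =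
      ∑ d ∈ Fintype.piFinset (fun i => (m i).divisors),
        (∏ i, jordanPhi (t i) (d i)) / (Nat.totient (Finset.univ.lcm d) : ℂ) *
          (etaG g d : ℂ) :=
  stmt8_general r g t m hm M hM0 hM
end

section
/- Let r ≥ 1, let a₁,…,a_r ∈ ℤ, let m₁,…,m_r ∈ ℕ, m := lcm[m₁,…,m_r], and M ∈ ℕ with m ∣ M. Then (1/φ(M)) · ∑_{1 ≤ k ≤ M, gcd(k,M)=1} gcd(k − a₁, m₁) ⋯ gcd(k − a_r, m_r) = ∑_{d₁ ∣ m₁, …, d_r ∣ m_r} [φ(d₁) ⋯ φ(d_r) / φ(lcm[d₁,…,d_r])] · η^{(a)}(d₁,…,d_r), where η^{(a)}(d₁,…,d_r) = 1 if gcd(d_i, a_i) = 1 for 1 ≤ i ≤ r and gcd(d_i, d_j) ∣ a_i − a_j for 1 ≤ i, j ≤ r, and η^{(a)}(d₁,…,d_r) = 0 otherwise. In particular the left-hand side does not depend on M. -/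
/-!
Writing `gcd(k - aᵢ, mᵢ) = ∑_{dᵢ ∣ mᵢ, dᵢ ∣ k - aᵢ} φ(dᵢ)` and exchanging the sums reduces the
theorem to counting, for each `d`, the units `k` mod `M` with `k ≡ aᵢ (mod dᵢ)` for all `i`.
If a unit solves this system, the `aᵢ` are units mod `dᵢ` and pairwise compatible. Conversely,
compatibility makes the system solvable (the Chinese remainder theorem for non-coprime moduli,
via `gcd(lcm(x, y), z) ∣ lcm(gcd(x, z), gcd(y, z))`), so it becomes one congruence `k ≡ b`
modulo `L = lcm d` with `b` a unit mod `L`. Reduction `(ℤ/M)ˣ → (ℤ/L)ˣ` is a surjective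
homomorphism, so each of its fibres has `φ(M) / φ(L)` elements.
-/

open Finset

/-- `etaA a d = 1` if `gcd(dᵢ, aᵢ) = 1` for all `i` and `gcd(dᵢ, dⱼ) ∣ aᵢ - aⱼ`
for all `i, j`, and `0` otherwise. -/
def etaA {r : ℕ} (a : Fin r → ℤ) (d : Fin r → ℕ) : ℕ :=
  if (∀ i, Int.gcd (a i) (d i) = 1) ∧
      (∀ i j, ((Nat.gcd (d i) (d j) : ℤ)) ∣ (a i - a j)) then 1 else 0

open scoped Nat

namespace Nat

theorem gcd_lcm_dvd_lcm_gcd (x y z : ℕ) : gcd (lcm x y) z ∣ lcm (gcd x z) (gcd y z) := by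
  rcases eq_or_ne x 0 with rfl | hx
  · simpa using dvd_lcm_left z _
  rcases eq_or_ne y 0 with rfl | hy
  · simpa using dvd_lcm_right _ z
  rcases eq_or_ne z 0 with rfl | hz
  · simp
  have hxz := gcd_ne_zero_right (m := x) hz
  have hyz := gcd_ne_zero_right (m := y) hz
  rw [← factorization_le_iff_dvd (gcd_ne_zero_right hz) (lcm_ne_zero hxz hyz),
    factorization_gcd (lcm_ne_zero hx hy) hz, factorization_lcm hx hy, factorization_lcm hxz hyz,
    factorization_gcd hx hz, factorization_gcd hy hz]
  intro p
  simp only [Finsupp.inf_apply, Finsupp.sup_apply, inf_sup_right, le_refl]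

theorem gcd_finset_lcm_dvd {ι : Type*} {s : Finset ι} {d : ι → ℕ} {z w : ℕ}
    (h : ∀ i ∈ s, gcd (d i) z ∣ w) : gcd (s.lcm d) z ∣ w := by
  classical
  induction s using Finset.induction_on with
  | empty => simp
  | insert i s _ ih =>
    rw [lcm_insert]
    exact (gcd_lcm_dvd_lcm_gcd _ _ _).trans
      (lcm_dvd (h i (mem_insert_self i s)) (ih fun j hj => h j (mem_insert_of_mem hj)))

end Nat

namespace Int

theorem gcd_eq_gcd_of_dvd_sub {x y : ℤ} {n : ℕ} (h : (n : ℤ) ∣ x - y) : gcd x n = gcd y n := by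
  obtain ⟨t, ht⟩ := h
  rw [show x = y + t * n by linarith, gcd_add_mul_right_left]

theorem natCast_finset_lcm_dvd_iff {ι : Type*} {s : Finset ι} {d : ι → ℕ} {z : ℤ} :
    ((s.lcm d : ℕ) : ℤ) ∣ z ↔ ∀ i ∈ s, (d i : ℤ) ∣ z := by
  simp only [natCast_dvd, Finset.lcm_dvd_iff]

theorem gcd_natCast_eq_sum_totient (n : ℤ) {m : ℕ} (hm : m ≠ 0) :
    gcd n m = ∑ d ∈ m.divisors with ((d : ℕ) : ℤ) ∣ n, φ d := by
  rw [← Nat.sum_totient (gcd n m)]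
  congr 1
  ext d
  simp [Nat.mem_divisors, ← natCast_dvd_natCast, dvd_coe_gcd_iff, hm, gcd_eq_zero_iff, and_comm]

theorem exists_dvd_sub_and_dvd_sub (m n : ℕ) {u v : ℤ} (h : (Nat.gcd m n : ℤ) ∣ u - v) :
    ∃ c : ℤ, (m : ℤ) ∣ c - u ∧ (n : ℤ) ∣ c - v := by
  obtain ⟨t, ht⟩ := h
  -- Bézout: `gcd m n = m * gcdA m n + n * gcdB m n`
  refine ⟨u - m * Nat.gcdA m n * t, ⟨-(Nat.gcdA m n * t), by ring⟩, Nat.gcdB m n * t, ?_⟩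
  rw [Nat.gcd_eq_gcd_ab] at ht
  linear_combination ht

theorem exists_forall_dvd_sub {ι : Type*} (s : Finset ι) (a : ι → ℤ) (d : ι → ℕ)
    (h : ∀ i ∈ s, ∀ j ∈ s, (Nat.gcd (d i) (d j) : ℤ) ∣ a i - a j) :
    ∃ b : ℤ, ∀ i ∈ s, (d i : ℤ) ∣ b - a i := by
  classical
  induction s using Finset.induction_on with
  | empty => exact ⟨0, by simp⟩
  | insert j s _ ih =>
    obtain ⟨b, hb⟩ := ih fun i hi k hk => h i (mem_insert_of_mem hi) k (mem_insert_of_mem hk)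
    have hcompat : (Nat.gcd (d j) (s.lcm d) : ℤ) ∣ a j - b := by
      rw [Nat.gcd_comm, natCast_dvd]
      refine Nat.gcd_finset_lcm_dvd fun i hi => ?_
      rw [← natCast_dvd, Nat.gcd_comm]
      have hji := h j (mem_insert_self j s) i (mem_insert_of_mem hi)
      have hbi := (natCast_dvd_natCast.2 (Nat.gcd_dvd_right (d j) (d i))).trans (hb i hi)
      simpa using dvd_sub hji hbi
    obtain ⟨c, hcj, hcs⟩ := exists_dvd_sub_and_dvd_sub (d j) (s.lcm d) hcompat
    refine ⟨c, forall_mem_insert _ _ _ |>.2 ⟨hcj, fun i hi => ?_⟩⟩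
    simpa using dvd_add (natCast_finset_lcm_dvd_iff.1 hcs i hi) (hb i hi)

end Int

theorem MonoidHom.card_mul_card_fiber {G H : Type*} [Group G] [Group H] [Fintype G] [Fintype H]
    [DecidableEq H] (f : G →* H) (hf : Function.Surjective f) (y : H) :
    Fintype.card H * #{g | f g = y} = Fintype.card G := by
  calc Fintype.card H * #{g | f g = y} = ∑ x : H, #{g | f g = x} := by
        rw [sum_congr rfl fun x _ => card_fiber_eq_of_mem_range f (hf x) (hf y), sum_const,
          card_univ, smul_eq_mul]
    _ = Fintype.card G := (card_eq_sum_card_fiberwise (by simp)).symm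

theorem Nat.card_filter_Icc_coprime_eq_card_units (M : ℕ) [NeZero M] (P : ZMod M → Prop)
    [DecidablePred P] : #{k ∈ Icc 1 M | Coprime k M ∧ P k} = #{u : (ZMod M)ˣ | P u} := by
  have hper : Function.Periodic (fun k : ℕ => k.Coprime M ∧ P k) M := fun k => by
    simp [coprime_add_self_left]
  rw [← Ico_add_one_right_eq_Icc, add_comm, filter_Ico_card_eq_of_periodic _ _ _ hper,
    count_eq_card_filter_range]
  refine card_bij' (fun k hk => ZMod.unitOfCoprime k (mem_filter.1 hk).2.1)
    (fun u _ => (u : ZMod M).val) ?_ ?_ ?_ ?_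
  · intro k hk
    simpa using (mem_filter.1 hk).2.2
  · intro u hu
    exact mem_filter.2 ⟨mem_range.2 (ZMod.val_lt _), ZMod.val_coe_unit_coprime u,
      by simpa using hu⟩
  · intro k hk
    simpa using Nat.mod_eq_of_lt (mem_range.1 (mem_filter.1 hk).1)
  · intro u _
    ext
    simp

theorem Nat.totient_mul_card_filter_Icc_coprime_dvd_sub {M L : ℕ} (hM : M ≠ 0) (hLM : L ∣ M)
    {b : ℤ} (hb : IsCoprime b L) :
    φ L * #{k ∈ Icc 1 M | Coprime k M ∧ (L : ℤ) ∣ k - b} = φ M := by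
  have : NeZero M := ⟨hM⟩
  have : NeZero L := ⟨ne_zero_of_dvd_ne_zero hM hLM⟩
  have hfiber : #{k ∈ Icc 1 M | Coprime k M ∧ (L : ℤ) ∣ k - b} =
      #{u : (ZMod M)ˣ | ZMod.unitsMap hLM u = ZMod.unitOfIsCoprime b hb} := by
    calc #{k ∈ Icc 1 M | Coprime k M ∧ (L : ℤ) ∣ k - b}
        = #{k ∈ Icc 1 M | Coprime k M ∧ ZMod.castHom hLM (ZMod L) k = b} := by
          refine congrArg card (filter_congr fun k _ => and_congr_right fun _ => ?_)
          rw [map_natCast, eq_comm]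
          exact_mod_cast (ZMod.intCast_eq_intCast_iff_dvd_sub b k L).symm
      _ = #{u : (ZMod M)ˣ | ZMod.castHom hLM (ZMod L) u = b} :=
          card_filter_Icc_coprime_eq_card_units M fun x => ZMod.castHom hLM (ZMod L) x = b
      _ = #{u : (ZMod M)ˣ | ZMod.unitsMap hLM u = ZMod.unitOfIsCoprime b hb} :=
          congrArg card (filter_congr fun u _ => by simp [Units.ext_iff, ZMod.unitsMap_val])
  rw [hfiber, ← ZMod.card_units_eq_totient, ← ZMod.card_units_eq_totient]
  exact (ZMod.unitsMap hLM).card_mul_card_fiber (ZMod.unitsMap_surjective hLM) _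

/-- The condition defining `etaA`, over an arbitrary index type. -/
def IsAdmissible {ι : Type*} (a : ι → ℤ) (d : ι → ℕ) : Prop :=
  (∀ i, Int.gcd (a i) (d i) = 1) ∧ ∀ i j, (Nat.gcd (d i) (d j) : ℤ) ∣ a i - a j

theorem IsAdmissible.of_coprime_of_dvd_sub {ι : Type*} {a : ι → ℤ} {d : ι → ℕ} {k M : ℕ}
    (hk : Nat.Coprime k M) (hdM : ∀ i, d i ∣ M) (h : ∀ i, (d i : ℤ) ∣ k - a i) :
    IsAdmissible a d := by
  refine ⟨fun i => ?_, fun i j => ?_⟩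
  · rw [← Int.gcd_eq_gcd_of_dvd_sub (h i)]
    exact hk.coprime_dvd_right (hdM i)
  · have hi := (Int.natCast_dvd_natCast.2 (Nat.gcd_dvd_left (d i) (d j))).trans (h i)
    have hj := (Int.natCast_dvd_natCast.2 (Nat.gcd_dvd_right (d i) (d j))).trans (h j)
    simpa using dvd_sub hj hi

theorem IsAdmissible.exists_isCoprime_forall_dvd_sub_iff {ι : Type*} [Fintype ι] {a : ι → ℤ}
    {d : ι → ℕ} (had : IsAdmissible a d) :
    ∃ b : ℤ, IsCoprime b (univ.lcm d : ℕ) ∧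
      ∀ k : ℤ, (∀ i, (d i : ℤ) ∣ k - a i) ↔ ((univ.lcm d : ℕ) : ℤ) ∣ k - b := by
  obtain ⟨b, hb⟩ := Int.exists_forall_dvd_sub univ a d fun i _ j _ => had.2 i j
  refine ⟨b, ?_, fun k => ?_⟩
  · have hprod : IsCoprime b (∏ i, (d i : ℤ)) := IsCoprime.prod_right fun i _ => by
      rw [Int.isCoprime_iff_gcd_eq_one, Int.gcd_eq_gcd_of_dvd_sub (hb i (mem_univ i))]
      exact had.1 i
    refine hprod.of_isCoprime_of_dvd_right ?_
    exact_mod_cast lcm_dvd_prod univ d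
  · rw [Int.natCast_finset_lcm_dvd_iff]
    refine ⟨fun h i _ => by simpa using dvd_sub (h i) (hb i (mem_univ i)), fun h i => ?_⟩
    simpa using dvd_add (h i (mem_univ i)) (hb i (mem_univ i))

theorem totient_lcm_mul_card_filter_Icc {r : ℕ} (a : Fin r → ℤ) (d : Fin r → ℕ) {M : ℕ}
    (hM : M ≠ 0) (hdM : ∀ i, d i ∣ M) :
    φ (univ.lcm d) * #{k ∈ Icc 1 M | Nat.Coprime k M ∧ ∀ i, (d i : ℤ) ∣ k - a i} =
      φ M * etaA a d := by
  unfold etaA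
  split_ifs with had
  · obtain ⟨b, hb, hsol⟩ := IsAdmissible.exists_isCoprime_forall_dvd_sub_iff had
    simp_rw [hsol, mul_one]
    exact Nat.totient_mul_card_filter_Icc_coprime_dvd_sub hM (lcm_dvd fun i _ => hdM i) hb
  · rw [mul_zero, filter_eq_empty_iff.2, card_empty, mul_zero]
    rintro k - ⟨hk, h⟩
    exact had (IsAdmissible.of_coprime_of_dvd_sub hk hdM h)

theorem sum_prod_gcd_sub_eq_sum_piFinset {ι : Type*} [Fintype ι] [DecidableEq ι] (a : ι → ℤ)
    {m : ι → ℕ} (hm : ∀ i, m i ≠ 0) (S : Finset ℕ) :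
    ∑ k ∈ S, ∏ i, Int.gcd (k - a i) (m i) =
      ∑ d ∈ Fintype.piFinset fun i => (m i).divisors,
        (∏ i, φ (d i)) * #{k ∈ S | ∀ i, (d i : ℤ) ∣ ((k : ℕ) : ℤ) - a i} := by
  have hexpand (k : ℕ) : ∏ i, Int.gcd (k - a i) (m i) =
      ∑ d ∈ Fintype.piFinset fun i => (m i).divisors,
        if ∀ i, (d i : ℤ) ∣ k - a i then ∏ i, φ (d i) else 0 := by
    simp_rw [Int.gcd_natCast_eq_sum_totient _ (hm _), sum_filter, prod_univ_sum,
      Fintype.prod_ite_zero]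
  simp_rw [hexpand]
  rw [sum_comm]
  simp_rw [← sum_filter, sum_const, smul_eq_mul, mul_comm]

theorem stmt11_general (r : ℕ) (a : Fin r → ℤ)
    (m : Fin r → ℕ) (hm : ∀ i, 0 < m i) (M : ℕ) (hM0 : 0 < M)
    (hM : (Finset.univ.lcm m) ∣ M) :
    (1 / (Nat.totient M : ℚ)) *
        ∑ k ∈ (Finset.Icc 1 M).filter (fun k => Nat.gcd k M = 1),
          ((∏ i, Int.gcd ((k : ℤ) - a i) (m i) : ℕ) : ℚ) =
      ∑ d ∈ Fintype.piFinset (fun i => (m i).divisors),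
        (∏ i, (Nat.totient (d i) : ℚ)) / (Nat.totient (Finset.univ.lcm d) : ℚ) *
          (etaA a d : ℚ) := by
  rw [← Nat.cast_sum, sum_prod_gcd_sub_eq_sum_piFinset a fun i => (hm i).ne', Nat.cast_sum,
    mul_sum]
  refine sum_congr rfl fun d hd => ?_
  have hdm (i : Fin r) : d i ∣ m i ∧ d i ≠ 0 := by
    have := Fintype.mem_piFinset.1 hd i
    exact ⟨Nat.dvd_of_mem_divisors this, (Nat.pos_of_mem_divisors this).ne'⟩
  have hcount := congrArg (Nat.cast : ℕ → ℚ) <| totient_lcm_mul_card_filter_Icc a d hM0.ne'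
    fun i => (hdm i).1.trans ((dvd_lcm (mem_univ i)).trans hM)
  push_cast at hcount
  rw [filter_filter]
  simp_rw [← Nat.coprime_iff_gcd_eq_one]
  have hφM : (φ M : ℚ) ≠ 0 := by exact_mod_cast (Nat.totient_pos.2 hM0).ne'
  have hφL : (φ (univ.lcm d) : ℚ) ≠ 0 := by
    have hL : univ.lcm d ≠ 0 := by simp [Finset.lcm_eq_zero_iff, hdm]
    exact_mod_cast (Nat.totient_pos.2 (Nat.pos_of_ne_zero hL)).ne'
  field_simp
  push_cast
  linear_combination (∏ i, (φ (d i) : ℚ)) * hcount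

theorem stmt11 (r : ℕ) (hr : 1 ≤ r) (a : Fin r → ℤ)
    (m : Fin r → ℕ) (hm : ∀ i, 0 < m i) (M : ℕ) (hM0 : 0 < M)
    (hM : (Finset.univ.lcm m) ∣ M) :
    (1 / (Nat.totient M : ℚ)) *
        ∑ k ∈ (Finset.Icc 1 M).filter (fun k => Nat.gcd k M = 1),
          ((∏ i, Int.gcd ((k : ℤ) - a i) (m i) : ℕ) : ℚ) =
      ∑ d ∈ Fintype.piFinset (fun i => (m i).divisors),
        (∏ i, (Nat.totient (d i) : ℚ)) / (Nat.totient (Finset.univ.lcm d) : ℚ) *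
          (etaA a d : ℚ) :=
  stmt11_general r a m hm M hM0 hM
end

section
/- Let a ∈ ℤ, let m₁, m₂ ∈ ℕ, m := lcm[m₁, m₂] with gcd(a, m) = 1, and let M ∈ ℕ with m ∣ M. Then ∑_{1 ≤ k ≤ M, gcd(k,M)=1} gcd(k − a, m₁) · gcd(k − a, m₂) = φ(M) · ∑_{d₁ ∣ m₁, d₂ ∣ m₂} φ(gcd(d₁, d₂)). -/
/-!
Expanding each gcd by Gauss's identity `gcd(x, m) = ∑_{d ∣ gcd(x, m)} φ(d)` turns the summand into
`∑_{d₁ ∣ m₁, d₂ ∣ m₂} φ(d₁) φ(d₂) [lcm(d₁, d₂) ∣ k - a]`. For `L = lcm(d₁, d₂)`, the residues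
`k` prime to `M` with `k ≡ a (mod L)` form a fibre of the surjection `(ℤ/M)ˣ → (ℤ/L)ˣ`, so there
are `φ(M) / φ(L)` of them, and `φ(d₁) φ(d₂) = φ(gcd(d₁, d₂)) φ(L)`.
-/

open Finset Nat

theorem Int.gcd_natCast_eq_sum_totient_s14 (x : ℤ) {m : ℕ} (hm : m ≠ 0) :
    x.gcd m = ∑ d ∈ m.divisors with ((d : ℕ) : ℤ) ∣ x, φ d := by
  rw [← Nat.sum_totient (x.gcd m)]
  congr 1
  ext d
  simp [Int.gcd, Nat.dvd_gcd_iff, Int.natCast_dvd, hm]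
  tauto

theorem Int.gcd_mul_gcd_eq_sum_totient (x : ℤ) {m₁ m₂ : ℕ} (h₁ : m₁ ≠ 0) (h₂ : m₂ ≠ 0) :
    x.gcd m₁ * x.gcd m₂ = ∑ d₁ ∈ m₁.divisors, ∑ d₂ ∈ m₂.divisors,
      if ((d₁.lcm d₂ : ℕ) : ℤ) ∣ x then φ d₁ * φ d₂ else 0 := by
  rw [x.gcd_natCast_eq_sum_totient_s14 h₁, x.gcd_natCast_eq_sum_totient_s14 h₂, sum_filter, sum_filter,
    sum_mul_sum]
  refine sum_congr rfl fun d₁ _ => sum_congr rfl fun d₂ _ => ?_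
  rw [ite_zero_mul_ite_zero]
  simp only [Int.natCast_dvd, Nat.lcm_dvd_iff]

theorem Nat.totient_mul_totient_eq_totient_gcd_mul_totient_lcm (a b : ℕ) :
    φ a * φ b = φ (a.gcd b) * φ (a.lcm b) := by
  rcases Nat.eq_zero_or_pos (a.gcd b) with h | h
  · obtain ⟨rfl, rfl⟩ := Nat.gcd_eq_zero_iff.mp h
    simp
  have key := Nat.totient_gcd_mul_totient_mul (a.gcd b) (a.lcm b)
  rw [Nat.gcd_eq_left ((Nat.gcd_dvd_left a b).trans (Nat.dvd_lcm_left a b)), Nat.gcd_mul_lcm,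
    Nat.totient_gcd_mul_totient_mul] at key
  exact Nat.eq_of_mul_eq_mul_right h key

theorem MonoidHom.card_fiber_mul_card_eq_of_surjective {G H : Type*} [Group G] [Fintype G]
    [Monoid H] [Fintype H] [DecidableEq H] (f : G →* H) (hf : Function.Surjective f) (b : H) :
    #{g | f g = b} * Fintype.card H = Fintype.card G := by
  have hsum := card_eq_sum_card_fiberwise (s := univ) (t := univ) fun g _ => mem_univ (f g)
  rw [sum_congr rfl fun c _ => card_fiber_eq_of_mem_range f (hf c) (hf b), sum_const,
    Finset.card_univ, Finset.card_univ, smul_eq_mul] at hsum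
  rw [hsum, mul_comm]

theorem ZMod.card_Icc_filter_coprime_and {M : ℕ} [NeZero M] (p : ZMod M → Prop)
    [DecidablePred p] :
    #{k ∈ Icc 1 M | Nat.Coprime k M ∧ p k} = #{u : (ZMod M)ˣ | p u} := by
  -- `(x - 1).val + 1` is the representative of `x` in `[1, M]`.
  have hcast (x : ZMod M) : (((x - 1).val + 1 : ℕ) : ZMod M) = x := by simp
  refine card_bij' (fun k hk => ZMod.unitOfCoprime k (mem_filter.1 hk).2.1)
    (fun u _ => ((u : ZMod M) - 1).val + 1) ?_ ?_ ?_ ?_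
  · intro k hk
    simpa using (mem_filter.1 hk).2.2
  · intro u hu
    have := ZMod.val_lt ((u : ZMod M) - 1)
    simp only [mem_filter, mem_univ, true_and] at hu
    refine mem_filter.2 ⟨mem_Icc.2 ⟨by omega, by omega⟩, ?_, by rwa [hcast]⟩
    rw [← ZMod.isUnit_iff_coprime, hcast]
    exact u.isUnit
  · intro k hk
    obtain ⟨hk1, hkM⟩ := mem_Icc.1 (mem_filter.1 hk).1
    have : (k : ZMod M) - 1 = ((k - 1 : ℕ) : ZMod M) := by rw [Nat.cast_sub hk1, Nat.cast_one]
    simp only [ZMod.coe_unitOfCoprime, this, ZMod.val_natCast,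
      Nat.mod_eq_of_lt (by omega : k - 1 < M)]
    omega
  · intro u _
    ext
    simp [hcast]

theorem card_Icc_filter_coprime_dvd_sub_mul_totient (a : ℤ) {L M : ℕ} (hLM : L ∣ M)
    (ha : IsCoprime a L) :
    #{k ∈ Icc 1 M | Nat.Coprime k M ∧ (L : ℤ) ∣ k - a} * φ L = φ M := by
  rcases eq_or_ne M 0 with rfl | hM
  · simp
  have : NeZero M := ⟨hM⟩
  have : NeZero L := ⟨ne_zero_of_dvd_ne_zero hM hLM⟩
  have hfiber : #{k ∈ Icc 1 M | Nat.Coprime k M ∧ (L : ℤ) ∣ k - a} =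
      #{u : (ZMod M)ˣ | ZMod.unitsMap hLM u = ZMod.unitOfIsCoprime a ha} := by
    convert ZMod.card_Icc_filter_coprime_and (fun x : ZMod M => (a : ZMod L) = x.cast) using 3
    · rw [ZMod.cast_natCast hLM, ← Int.cast_natCast (R := ZMod L),
        ZMod.intCast_eq_intCast_iff_dvd_sub]
    · rw [Units.ext_iff, ZMod.unitsMap_val, ZMod.coe_unitOfIsCoprime, eq_comm]
  rw [hfiber, ← ZMod.card_units_eq_totient, ← ZMod.card_units_eq_totient]
  exact MonoidHom.card_fiber_mul_card_eq_of_surjective _ (ZMod.unitsMap_surjective hLM) _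

theorem stmt14_general (a : ℤ) (m₁ m₂ : ℕ) (h₁ : 0 < m₁) (h₂ : 0 < m₂)
    (ha : Int.gcd a (Nat.lcm m₁ m₂) = 1)
    (M : ℕ) (hM : Nat.lcm m₁ m₂ ∣ M) :
    ∑ k ∈ (Finset.Icc 1 M).filter (fun k => Nat.gcd k M = 1),
        Int.gcd ((k : ℤ) - a) m₁ * Int.gcd ((k : ℤ) - a) m₂ =
      Nat.totient M *
        ∑ d₁ ∈ m₁.divisors, ∑ d₂ ∈ m₂.divisors, Nat.totient (Nat.gcd d₁ d₂) := by
  have hcop : IsCoprime a (m₁.lcm m₂ : ℤ) := Int.isCoprime_iff_gcd_eq_one.mpr ha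
  have hterm : ∀ d₁ ∈ m₁.divisors, ∀ d₂ ∈ m₂.divisors,
      ∑ k ∈ Icc 1 M with Nat.gcd k M = 1,
          (if ((d₁.lcm d₂ : ℕ) : ℤ) ∣ k - a then φ d₁ * φ d₂ else 0) =
        φ M * φ (d₁.gcd d₂) := by
    intro d₁ hd₁ d₂ hd₂
    have hL : d₁.lcm d₂ ∣ m₁.lcm m₂ :=
      lcm_dvd_lcm (Nat.dvd_of_mem_divisors hd₁) (Nat.dvd_of_mem_divisors hd₂)
    rw [← sum_filter, sum_const, smul_eq_mul, filter_filter,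
      totient_mul_totient_eq_totient_gcd_mul_totient_lcm,
      ← card_Icc_filter_coprime_dvd_sub_mul_totient a (hL.trans hM)
        (hcop.of_isCoprime_of_dvd_right (Int.natCast_dvd_natCast.2 hL))]
    ring
  simp_rw [Int.gcd_mul_gcd_eq_sum_totient _ h₁.ne' h₂.ne']
  rw [sum_comm, mul_sum]
  refine sum_congr rfl fun d₁ hd₁ => ?_
  rw [sum_comm, mul_sum]
  exact sum_congr rfl (hterm d₁ hd₁)

theorem stmt14 (a : ℤ) (m₁ m₂ : ℕ) (h₁ : 0 < m₁) (h₂ : 0 < m₂)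
    (ha : Int.gcd a (Nat.lcm m₁ m₂) = 1)
    (M : ℕ) (hM0 : 0 < M) (hM : Nat.lcm m₁ m₂ ∣ M) :
    ∑ k ∈ (Finset.Icc 1 M).filter (fun k => Nat.gcd k M = 1),
        Int.gcd ((k : ℤ) - a) m₁ * Int.gcd ((k : ℤ) - a) m₂ =
      Nat.totient M *
        ∑ d₁ ∈ m₁.divisors, ∑ d₂ ∈ m₂.divisors, Nat.totient (Nat.gcd d₁ d₂) :=
  stmt14_general a m₁ m₂ h₁ h₂ ha M hM
end

section
/- Let r ≥ 1 and m₁,…,m_r ∈ ℕ. The number of cyclic subgroups of the direct product C_{m₁} × ⋯ × C_{m_r} of cyclic groups of orders m₁,…,m_r is given by c(C_{m₁} × ⋯ × C_{m_r}) = ∑_{d₁ ∣ m₁, …, d_r ∣ m_r} φ(d₁) ⋯ φ(d_r) / φ(lcm[d₁,…,d_r]). -/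
open Finset

/-! A cyclic subgroup `H` of a finite group has exactly `φ |H|` generators, so giving each element
`g` the weight `1 / φ (ord g)` counts every cyclic subgroup exactly once. In `∏ C_{mᵢ}` the order
of `g` is the lcm of the orders `dᵢ` of its coordinates, and since `C_{mᵢ}` has `φ dᵢ` elements
of order `dᵢ`, exactly `∏ φ dᵢ` elements have coordinate orders `(dᵢ)`. -/

section Generators

variable {G : Type*} [AddGroup G]

theorem AddSubgroup.zmultiples_eq_iff_mem_and_addOrderOf_eq {H : AddSubgroup G} [Finite H]
    {g : G} : zmultiples g = H ↔ g ∈ H ∧ addOrderOf g = Nat.card H := by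
  constructor
  · rintro rfl
    exact ⟨mem_zmultiples g, (Nat.card_zmultiples g).symm⟩
  · rintro ⟨hg, hord⟩
    refine eq_of_le_of_card_ge (zmultiples_le.mpr hg) ?_
    rw [Nat.card_zmultiples, hord]

theorem AddSubgroup.natCard_generators_eq_totient (H : AddSubgroup G) [IsAddCyclic H] [Finite H] :
    Nat.card {g : G // zmultiples g = H} = (Nat.card H).totient := by
  classical
  have : Fintype H := Fintype.ofFinite H
  calc Nat.card {g : G // zmultiples g = H}
      = Nat.card {g : G // g ∈ H ∧ addOrderOf g = Nat.card H} :=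
        Nat.card_congr (Equiv.subtypeEquivRight fun _ => zmultiples_eq_iff_mem_and_addOrderOf_eq)
    _ = Nat.card {h : H // addOrderOf h = Nat.card H} :=
        Nat.card_congr ((Equiv.subtypeSubtypeEquivSubtypeInter (· ∈ H) _).symm.trans
          (Equiv.subtypeEquivRight fun h => by rw [addOrderOf_coe]))
    _ = (Nat.card H).totient := by
        rw [Nat.card_eq_fintype_card, Fintype.card_subtype, Nat.card_eq_fintype_card]
        exact IsAddCyclic.card_addOrderOf_eq_totient dvd_rfl

theorem natCard_isAddCyclic_addSubgroup_eq_sum [Fintype G] :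
    (Nat.card {H : AddSubgroup G // IsAddCyclic H} : ℚ) =
      ∑ g : G, 1 / ((addOrderOf g).totient : ℚ) := by
  classical
  have : Fintype (AddSubgroup G) := Fintype.ofFinite _
  have hmaps : ∀ g ∈ (univ : Finset G), AddSubgroup.zmultiples g ∈
      ({H | IsAddCyclic H} : Finset (AddSubgroup G)) :=
    fun g _ => mem_filter.mpr ⟨mem_univ _, inferInstance⟩
  rw [← sum_fiberwise_of_maps_to hmaps, Nat.card_eq_fintype_card, Fintype.card_subtype,
    cast_card]
  refine sum_congr rfl fun H hH => ?_
  have : IsAddCyclic H := (mem_filter.mp hH).2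
  have hgen : #{g : G | AddSubgroup.zmultiples g = H} = (Nat.card H).totient := by
    rw [← Fintype.card_subtype, ← Nat.card_eq_fintype_card,
      AddSubgroup.natCard_generators_eq_totient]
  have htot : ((Nat.card H).totient : ℚ) ≠ 0 := by
    exact_mod_cast (Nat.totient_pos.mpr Nat.card_pos).ne'
  calc (1 : ℚ) = ∑ _g ∈ ({g : G | AddSubgroup.zmultiples g = H} : Finset G),
        1 / ((Nat.card H).totient : ℚ) := by
        rw [sum_const, hgen, nsmul_eq_mul, mul_one_div_cancel htot]
    _ = _ := sum_congr rfl fun g hg => by rw [← (mem_filter.mp hg).2, Nat.card_zmultiples]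

end Generators

theorem card_addOrderOf_pi_eq_prod_totient {ι : Type*} [Fintype ι] [DecidableEq ι]
    {G : ι → Type*} [∀ i, AddGroup (G i)] [∀ i, IsAddCyclic (G i)] [∀ i, Fintype (G i)]
    {d : ι → ℕ} (hd : ∀ i, d i ∣ Fintype.card (G i)) :
    #{g : ∀ i, G i | (fun i => addOrderOf (g i)) = d} = ∏ i, (d i).totient := by
  have hfiber : ({g : ∀ i, G i | (fun i => addOrderOf (g i)) = d} : Finset (∀ i, G i)) =
      Fintype.piFinset fun i => {x : G i | addOrderOf x = d i} := by
    ext g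
    simp [funext_iff]
  rw [hfiber, Fintype.card_piFinset]
  exact prod_congr rfl fun i _ => IsAddCyclic.card_addOrderOf_eq_totient (hd i)

theorem stmt16_general (r : ℕ) (m : Fin r → ℕ) (hm : ∀ i, 0 < m i) :
    ((Nat.card {H : AddSubgroup (∀ i, ZMod (m i)) // IsAddCyclic H}) : ℚ) =
      ∑ d ∈ Fintype.piFinset (fun i => (m i).divisors),
        (∏ i, (Nat.totient (d i) : ℚ)) / (Nat.totient (Finset.univ.lcm d) : ℚ) := by
  have : ∀ i, NeZero (m i) := fun i => ⟨(hm i).ne'⟩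
  have hmaps : ∀ g ∈ (univ : Finset (∀ i, ZMod (m i))),
      (fun i => addOrderOf (g i)) ∈ Fintype.piFinset fun i => (m i).divisors := fun g _ =>
    Fintype.mem_piFinset.mpr fun i =>
      Nat.mem_divisors.mpr ⟨by simpa using addOrderOf_dvd_card (x := g i), (hm i).ne'⟩
  rw [natCard_isAddCyclic_addSubgroup_eq_sum, ← sum_fiberwise_of_maps_to hmaps]
  refine sum_congr rfl fun d hd => ?_
  have hcard := card_addOrderOf_pi_eq_prod_totient (G := fun i => ZMod (m i)) fun i =>
    by simpa using (Nat.mem_divisors.mp (Fintype.mem_piFinset.mp hd i)).1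
  rw [sum_congr rfl fun g hg => by rw [Pi.addOrderOf, (mem_filter.mp hg).2], sum_const, hcard,
    nsmul_eq_mul, Nat.cast_prod, mul_one_div]

theorem stmt16 (r : ℕ) (hr : 1 ≤ r) (m : Fin r → ℕ) (hm : ∀ i, 0 < m i) :
    ((Nat.card {H : AddSubgroup (∀ i, ZMod (m i)) // IsAddCyclic H}) : ℚ) =
      ∑ d ∈ Fintype.piFinset (fun i => (m i).divisors),
        (∏ i, (Nat.totient (d i) : ℚ)) / (Nat.totient (Finset.univ.lcm d) : ℚ) :=
  stmt16_general r m hm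
end

section
/- Let j ∈ ℕ. For every n ∈ ℕ, (1/n) · ∑_{k=1}^{n} gcd(k^j, n) = ∑_{d ∣ n} φ(d) · N^{(j)}(d) / d, where N^{(j)} is the multiplicative function determined by N^{(j)}(p^a) = p^{⌊(j−1)a/j⌋} for every prime power p^a (a ≥ 1) and N^{(j)}(1) = 1. -/
open Finset

/-- The multiplicative function `N^{(j)}` determined by
`N^{(j)}(p^a) = p^{⌊(j-1)a/j⌋}` on prime powers and `N^{(j)}(1) = 1`. -/
def Nj (j d : ℕ) : ℕ :=
  d.factorization.prod fun p a => p ^ ((j - 1) * a / j)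

/-!
The solutions of `x ^ j ≡ 0 (mod d)` are exactly the multiples of `Nat.ceilRoot j d`, the number
whose `p`-adic valuations are those of `d` divided by `j` and rounded up. Since
`⌈a / j⌉ + ⌊(j - 1) a / j⌋ = a`, we get `d = ceilRoot j d * Nj j d`, so exactly `(n / d) * Nj j d`
of the `k ∈ [1, n]` satisfy `d ∣ k ^ j`. Writing `gcd (k ^ j) n = ∑ φ d` over the common divisors
`d` of `k ^ j` and `n` and swapping the two sums gives the formula.
-/

open scoped Nat

theorem Nat.add_pred_div_add_pred_mul_div {j : ℕ} (hj : 0 < j) (a : ℕ) :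
    (a + j - 1) / j + (j - 1) * a / j = a := by
  obtain ⟨i, rfl⟩ := Nat.exists_eq_add_one_of_ne_zero hj.ne'
  rw [Nat.add_sub_cancel, ← Nat.add_assoc, Nat.add_sub_cancel]
  have h₁ := Nat.div_add_mod (a + i) (i + 1)
  have h₂ := Nat.mod_lt (a + i) hj
  have h₃ := Nat.div_add_mod (i * a) (i + 1)
  have h₄ := Nat.mod_lt (i * a) hj
  generalize (a + i) / (i + 1) = c, (a + i) % (i + 1) = r, i * a / (i + 1) = q,
    i * a % (i + 1) = s at *
  -- `(i + 1) * (c + q) = (i + 1) * a + (i - r - s)` with `|i - r - s| ≤ i`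
  refine le_antisymm (Nat.lt_succ_iff.1 (Nat.lt_of_mul_lt_mul_left (a := i + 1) ?_))
    (Nat.lt_succ_iff.1 (Nat.lt_of_mul_lt_mul_left (a := i + 1) ?_)) <;> nlinarith

theorem Nat.ceilRoot_mul_Nj {j d : ℕ} (hj : j ≠ 0) (hd : d ≠ 0) :
    ceilRoot j d * Nj j d = d := by
  rw [ceilRoot, if_neg (by simp [hj, hd]), Nj, ← Finsupp.prod_mul]
  conv_rhs => rw [← prod_factorization_pow_eq_self hd]
  exact prod_congr rfl fun p _ => by
    dsimp only
    rw [← pow_add, add_pred_div_add_pred_mul_div (pos_of_ne_zero hj)]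

theorem Nat.card_filter_dvd_pow_Icc {j d n : ℕ} (hj : j ≠ 0) (hdn : d ∣ n) (hn : n ≠ 0) :
    #{k ∈ Icc 1 n | d ∣ k ^ j} = n / d * Nj j d := by
  have hd : d ≠ 0 := ne_zero_of_dvd_ne_zero hn hdn
  rw [filter_congr fun k _ => dvd_pow_iff_ceilRoot_dvd hj, ← zero_add 1, Icc_add_one_left_eq_Ioc,
    Ioc_filter_dvd_card_eq_div]
  obtain ⟨m, rfl⟩ := hdn
  have hm : d * m = ceilRoot j d * (Nj j d * m) := by rw [← mul_assoc, ceilRoot_mul_Nj hj hd]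
  rw [hm, Nat.mul_div_cancel_left _ (pos_of_ne_zero (ceilRoot_ne_zero.2 ⟨hj, hd⟩)), ← hm,
    Nat.mul_div_cancel_left _ (pos_of_ne_zero hd), mul_comm]

theorem Nat.gcd_eq_sum_totient_filter_dvd {n : ℕ} (hn : n ≠ 0) (m : ℕ) :
    gcd m n = ∑ d ∈ n.divisors with d ∣ m, φ d := by
  rw [← sum_totient (gcd m n), ← divisors_filter_dvd_of_dvd hn (gcd_dvd_right m n)]
  exact sum_congr (filter_congr fun d hd => by
    rw [dvd_gcd_iff, and_iff_left (dvd_of_mem_divisors hd)]) fun _ _ => rfl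

theorem Nat.sum_Icc_gcd_pow {j : ℕ} (hj : j ≠ 0) (n : ℕ) :
    ∑ k ∈ Icc 1 n, gcd (k ^ j) n = ∑ d ∈ n.divisors, φ d * (n / d * Nj j d) :=
  calc ∑ k ∈ Icc 1 n, gcd (k ^ j) n
      = ∑ k ∈ Icc 1 n, ∑ d ∈ n.divisors with d ∣ k ^ j, φ d :=
        sum_congr rfl fun k hk =>
          gcd_eq_sum_totient_filter_dvd (by have := mem_Icc.1 hk; omega) _
    _ = ∑ d ∈ n.divisors, #{k ∈ Icc 1 n | d ∣ k ^ j} * φ d := by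
        simp_rw [sum_filter]
        rw [sum_comm]
        exact sum_congr rfl fun d _ => by rw [← sum_filter, sum_const, smul_eq_mul]
    _ = ∑ d ∈ n.divisors, φ d * (n / d * Nj j d) :=
        sum_congr rfl fun d hd => by
          obtain ⟨hdn, hn⟩ := mem_divisors.1 hd
          rw [card_filter_dvd_pow_Icc hj hdn hn, mul_comm]

theorem stmt18_general (j : ℕ) (hj : 1 ≤ j) (n : ℕ) :
    (1 / (n : ℚ)) * ∑ k ∈ Finset.Icc 1 n, (Nat.gcd (k ^ j) n : ℚ) =
      ∑ d ∈ n.divisors, (Nat.totient d : ℚ) * (Nj j d : ℚ) / (d : ℚ) := by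
  rw [← Nat.cast_sum, Nat.sum_Icc_gcd_pow (Nat.one_le_iff_ne_zero.1 hj), Nat.cast_sum, mul_sum]
  refine sum_congr rfl fun d hd => ?_
  obtain ⟨hdn, hn⟩ := Nat.mem_divisors.1 hd
  have hd0 : (d : ℚ) ≠ 0 := Nat.cast_ne_zero.2 (ne_zero_of_dvd_ne_zero hn hdn)
  rw [Nat.cast_mul, Nat.cast_mul, Nat.cast_div hdn hd0]
  field_simp

theorem stmt18 (j : ℕ) (hj : 1 ≤ j) (n : ℕ) (hn : 0 < n) :
    (1 / (n : ℚ)) * ∑ k ∈ Finset.Icc 1 n, (Nat.gcd (k ^ j) n : ℚ) =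
      ∑ d ∈ n.divisors, (Nat.totient d : ℚ) * (Nj j d : ℚ) / (d : ℚ) :=
  stmt18_general j hj n
end
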